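/- Let R^± = {X ∈ J^1 : tr(X)=0, X^{×2} = P^±}. Then: (a) R^+ is empty; (b) R^- = {rP^- + Q^+(x) : r ∈ ℝ, x ∈ O, n(x)=1}; consequently (c) P^+ and P^- lie in different F_{4(-20)}-orbits. -/

import Mathlib

/-!
Write a traceless `X = h¹(a,b,c;x,y,z)`. The equation `X^{×2} = h¹(ε,−ε,0;0,0,1)` splits into
three scalar and three octonion equations, which express `yz`, `zx`, `xy` through `x̄`, `ȳ`,
`z̄`. Although `𝕆` is not associative, `Re((xy)z) = Re(x(yz))`; evaluated on these products
this forces `(a + b)ε = 0`, hence `c = 0`, `b = −a` and `n(x) = n(y) = −ε`. For `ε = 1` this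
contradicts `n(x) ≥ 0`; for `ε = −1` alternativity `x̄(xy) = n(x)y` gives `y = x̄`, `z = b·1`.

An automorphism `g` of `J¹` satisfies `L_{gX} = g L_X g⁻¹`, and `tr L_X = 9 tr X`, so `g`
preserves `tr` and hence `×`. Thus `g` maps `R⁻` into the set of traceless cross square roots
of `gP⁻`; if `gP⁻ = P⁺`, the nonempty `R⁻` would be mapped into the empty `R⁺`.
-/

noncomputable section
/-! ## The octonions, realized via the Cayley–Dickson construction on the quaternions -/

/-- The octonions `𝕆 = ℍ ⊕ ℍ`. -/
abbrev Oct : Type := Quaternion ℝ × Quaternion ℝ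

/-- Octonion multiplication `(a,b)(c,d) = (ac - d̄b, da + bc̄)`. -/
def omul (x y : Oct) : Oct :=
  (x.1 * y.1 - star y.2 * x.2, y.2 * x.1 + x.2 * star y.1)

/-- Octonion conjugation `x ↦ x̄`. -/
def oconj (x : Oct) : Oct := (star x.1, -x.2)

/-- The unit octonion `1`. -/
def oone : Oct := (1, 0)

/-- The real (scalar) part `Re(x)` of an octonion. -/
def oRe (x : Oct) : ℝ := x.1.re

/-- The standard inner product `(x|y)` on the octonions. -/
def oinner (x y : Oct) : ℝ := (x.1 * star y.1).re + (x.2 * star y.2).re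

/-- The norm form `n(x) = (x|x)`. -/
def onorm (x : Oct) : ℝ := oinner x x

/-- The imaginary (vector) part `Im(x)` of an octonion. -/
def oIm (x : Oct) : Oct := x - oRe x • oone

theorem oRe_add (x y : Oct) : oRe (x + y) = oRe x + oRe y := by
  simp [oRe]

theorem oRe_sub (x y : Oct) : oRe (x - y) = oRe x - oRe y := by
  simp [oRe]

theorem oRe_smul (c : ℝ) (x : Oct) : oRe (c • x) = c * oRe x := by
  simp [oRe]

theorem oRe_oone : oRe oone = 1 := by
  simp [oRe, oone] <;> rfl

/-- The space `Im 𝕆` of imaginary octonions. -/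
def ImOct : Submodule ℝ Oct where
  carrier := {x | oRe x = 0}
  add_mem' := by
    intro a b ha hb
    simp only [Set.mem_setOf_eq] at *
    rw [oRe_add, ha, hb, add_zero]
  zero_mem' := by
    show oRe 0 = 0
    simp [oRe] <;> rfl
  smul_mem' := by
    intro c x hx
    simp only [Set.mem_setOf_eq] at *
    rw [oRe_smul, hx, mul_zero]

theorem oIm_mem (z : Oct) : oIm z ∈ ImOct := by
  show oRe (oIm z) = 0
  show oRe (z - oRe z • oone) = 0
  rw [oRe_sub, oRe_smul, oRe_oone, mul_one, sub_self]

theorem oinner_oone (x : Oct) : oinner x oone = oRe x := by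
  simp [oinner, oone, oRe] <;> rfl
/-! ## Small helper lemmas on the automorphism group of a module -/

theorem le_mul_apply {M : Type*} [AddCommMonoid M] [Module ℝ M] (a b : M ≃ₗ[ℝ] M) (x : M) :
    (a * b) x = a (b x) := rfl

theorem le_one_apply {M : Type*} [AddCommMonoid M] [Module ℝ M] (x : M) :
    (1 : M ≃ₗ[ℝ] M) x = x := rfl

theorem le_apply_inv_apply {M : Type*} [AddCommMonoid M] [Module ℝ M] (a : M ≃ₗ[ℝ] M) (z : M) :
    a (a⁻¹ z) = z := by
  rw [← le_mul_apply, mul_inv_cancel, le_one_apply]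

theorem le_inv_apply_apply {M : Type*} [AddCommMonoid M] [Module ℝ M] (a : M ≃ₗ[ℝ] M) (z : M) :
    a⁻¹ (a z) = z := by
  rw [← le_mul_apply, inv_mul_cancel, le_one_apply]
/-! ## The exceptional Jordan algebra `J¹`

`J¹` is the real vector space `ℝ³ ⊕ 𝕆³`, whose element `((ξ₁,ξ₂,ξ₃),(x₁,x₂,x₃))`
represents the twisted-hermitian matrix `h¹(ξ₁,ξ₂,ξ₃; x₁,x₂,x₃)`, i.e.
`ξ₁E₁ + ξ₂E₂ + ξ₃E₃ + F¹₁(x₁) + F¹₂(x₂) + F¹₃(x₃)`. -/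

abbrev J1 : Type := (ℝ × ℝ × ℝ) × (Oct × Oct × Oct)

/-- `jmk a b c x y z = h¹(a,b,c;x,y,z)`. -/
def jmk (a b c : ℝ) (x y z : Oct) : J1 := ((a, b, c), (x, y, z))

def ja1 (X : J1) : ℝ := X.1.1
def ja2 (X : J1) : ℝ := X.1.2.1
def ja3 (X : J1) : ℝ := X.1.2.2
def jx1 (X : J1) : Oct := X.2.1
def jx2 (X : J1) : Oct := X.2.2.1
def jx3 (X : J1) : Oct := X.2.2.2

/-- The Jordan product `X ∘ Y = (XY + YX)/2` of `J¹`, written out in components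
(obtained by multiplying the twisted-hermitian matrices `h¹(ξ;x)` and `h¹(η;y)`). -/
def jmul (X Y : J1) : J1 :=
  jmk
    (ja1 X * ja1 Y - oinner (jx2 X) (jx2 Y) - oinner (jx3 X) (jx3 Y))
    (ja2 X * ja2 Y + oinner (jx1 X) (jx1 Y) - oinner (jx3 X) (jx3 Y))
    (ja3 X * ja3 Y + oinner (jx1 X) (jx1 Y) - oinner (jx2 X) (jx2 Y))
    ((2:ℝ)⁻¹ • ((ja2 X + ja3 X) • jx1 Y + (ja2 Y + ja3 Y) • jx1 X
      - (oconj (omul (jx2 Y) (jx3 X)) + oconj (omul (jx2 X) (jx3 Y)))))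
    ((2:ℝ)⁻¹ • ((ja3 X + ja1 X) • jx2 Y + (ja3 Y + ja1 Y) • jx2 X
      + (oconj (omul (jx3 Y) (jx1 X)) + oconj (omul (jx3 X) (jx1 Y)))))
    ((2:ℝ)⁻¹ • ((ja1 X + ja2 X) • jx3 Y + (ja1 Y + ja2 Y) • jx3 X
      + (oconj (omul (jx1 Y) (jx2 X)) + oconj (omul (jx1 X) (jx2 Y)))))

/-- The trace. -/
def jtr (X : J1) : ℝ := ja1 X + ja2 X + ja3 X

/-- The identity element `E`. -/
def jE : J1 := jmk 1 1 1 0 0 0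

/-- The inner product `(X|Y) = tr(X ∘ Y)`. -/
def jinner (X Y : J1) : ℝ := jtr (jmul X Y)

/-- Freudenthal's cross product
`X × Y = (2 X∘Y − tr(X)Y − tr(Y)X + (tr(X)tr(Y) − (X|Y))E)/2`. -/
def jcross (X Y : J1) : J1 :=
  (2:ℝ)⁻¹ • ((2:ℝ) • jmul X Y - jtr X • Y - jtr Y • X + (jtr X * jtr Y - jinner X Y) • jE)

/-- `X^{×2} = X × X`. -/
def jsq (X : J1) : J1 := jcross X X

/-- The determinant `det X = (X|X×X)/3`. -/
def jdet (X : J1) : ℝ := (3:ℝ)⁻¹ * jinner X (jcross X X)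

/-- The characteristic polynomial `Φ_X(t) = det (tE − X)`. -/
def charP (X : J1) (t : ℝ) : ℝ := jdet (t • jE - X)

/-- The quadratic form `Q(X) = −tr(X^{×2})`. -/
def Qform (X : J1) : ℝ := - jtr (jsq X)

/-- The diagonal matrix units. -/
def jE1 : J1 := jmk 1 0 0 0 0 0
def jE2 : J1 := jmk 0 1 0 0 0 0
def jE3 : J1 := jmk 0 0 1 0 0 0

/-- The off-diagonal elements `F¹ᵢ(x)`. -/
def jF1 (x : Oct) : J1 := jmk 0 0 0 x 0 0
def jF2 (x : Oct) : J1 := jmk 0 0 0 0 x 0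
def jF3 (x : Oct) : J1 := jmk 0 0 0 0 0 x

/-- `diag(a,b,c)`. -/
def jdiag (a b c : ℝ) : J1 := jmk a b c 0 0 0

/-- `P⁺ = h¹(1,−1,0;0,0,1)`. -/
def Pplus : J1 := jmk 1 (-1) 0 0 0 oone

/-- `P⁻ = h¹(−1,1,0;0,0,1)`. -/
def Pminus : J1 := jmk (-1) 1 0 0 0 oone

/-- `Q⁺(x) = h¹(0,0,0;x,x̄,0)`. -/
def Qplus (x : Oct) : J1 := jmk 0 0 0 x (oconj x) 0
/-! ## The exceptional Lie group `F₄₍₋₂₀₎` -/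

/-- `F₄₍₋₂₀₎`, the automorphism group of the exceptional Jordan algebra `J¹`:
`{g ∈ GL_ℝ(J¹) | g(X ∘ Y) = gX ∘ gY}`. -/
def F4 : Subgroup (J1 ≃ₗ[ℝ] J1) where
  carrier := {g | ∀ X Y : J1, g (jmul X Y) = jmul (g X) (g Y)}
  one_mem' := by
    intro X Y
    rfl
  mul_mem' := by
    intro a b ha hb
    have ha' : ∀ X Y : J1, a (jmul X Y) = jmul (a X) (a Y) := ha
    have hb' : ∀ X Y : J1, b (jmul X Y) = jmul (b X) (b Y) := hb
    intro X Y
    simp only [le_mul_apply]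
    rw [hb', ha']
  inv_mem' := by
    intro a ha
    have ha' : ∀ X Y : J1, a (jmul X Y) = jmul (a X) (a Y) := ha
    intro X Y
    apply a.injective
    rw [le_apply_inv_apply, ha', le_apply_inv_apply, le_apply_inv_apply]

/-- The (full) stabilizer subgroup of an element `v` inside `GL_ℝ(J¹)`;
`F4 ⊓ fixSubgroup v` is the stabilizer `(F₄₍₋₂₀₎)_v`, and intersections
`F4 ⊓ fixSubgroup v₁ ⊓ ⋯ ⊓ fixSubgroup vₙ` are pointwise stabilizers. -/
def fixSubgroup (v : J1) : Subgroup (J1 ≃ₗ[ℝ] J1) where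
  carrier := {g | g v = v}
  one_mem' := by
    show (1 : J1 ≃ₗ[ℝ] J1) v = v
    rfl
  mul_mem' := by
    intro a b ha hb
    have ha' : a v = v := ha
    have hb' : b v = v := hb
    show (a * b) v = v
    rw [le_mul_apply, hb', ha']
  inv_mem' := by
    intro a ha
    have ha' : a v = v := ha
    show a⁻¹ v = v
    conv_lhs => rw [← ha']
    rw [le_inv_apply_apply]

/-- The `F₄₍₋₂₀₎`-orbit of `v ∈ J¹`. -/
def orbF4 (v : J1) : Set J1 := {w | ∃ g ∈ F4, g v = w}

namespace LinearMap

variable {R M N : Type*} [CommRing R] [AddCommGroup M] [Module R M] [AddCommGroup N]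
  [Module R N] [Module.Free R M] [Module.Finite R M] [Module.Free R N] [Module.Finite R N]

theorem trace_eq_trace_fst_add_trace_snd (f : M × N →ₗ[R] M × N) :
    trace R (M × N) f =
      trace R M (fst R M N ∘ₗ f ∘ₗ inl R M N) + trace R N (snd R M N ∘ₗ f ∘ₗ inr R M N) := by
  have hid : inl R M N ∘ₗ fst R M N + inr R M N ∘ₗ snd R M N = id := by
    ext x <;> simp
  conv_lhs => rw [← comp_id f, ← hid]
  rw [comp_add, map_add, ← comp_assoc, ← comp_assoc, trace_comp_comm',
    trace_comp_comm' (snd R M N)]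

theorem trace_eq_mul_finrank_of_forall_apply_eq_smul {f : M →ₗ[R] M} {c : R}
    (h : ∀ v, f v = c • v) : trace R M f = c * Module.finrank R M := by
  rw [show f = c • id from ext h, map_smul, trace_id, smul_eq_mul]

end LinearMap

theorem omul_oone (x : Oct) : omul x oone = x := by
  simp [omul, oone]

theorem oone_omul (x : Oct) : omul oone x = x := by
  simp [omul, oone]

theorem omul_zero (x : Oct) : omul x 0 = 0 := by
  simp [omul]

theorem zero_omul (x : Oct) : omul 0 x = 0 := by
  simp [omul]

theorem omul_add (x y z : Oct) : omul x (y + z) = omul x y + omul x z := by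
  simp only [omul, Prod.fst_add, Prod.snd_add, Prod.mk_add_mk, star_add, Prod.mk.injEq]
  constructor <;> noncomm_ring

theorem add_omul (x y z : Oct) : omul (x + y) z = omul x z + omul y z := by
  simp only [omul, Prod.fst_add, Prod.snd_add, Prod.mk_add_mk, Prod.mk.injEq]
  constructor <;> noncomm_ring

theorem omul_smul (r : ℝ) (x y : Oct) : omul x (r • y) = r • omul x y := by
  simp [omul, Prod.smul_def, smul_sub, smul_add]

theorem smul_omul (r : ℝ) (x y : Oct) : omul (r • x) y = r • omul x y := by
  simp [omul, Prod.smul_def, smul_sub, smul_add]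

theorem oconj_oconj (x : Oct) : oconj (oconj x) = x := by
  simp [oconj]

theorem oconj_oone : oconj oone = oone := by
  simp [oconj, oone]

theorem oconj_zero : oconj 0 = 0 := by
  simp [oconj]

theorem oconj_add (x y : Oct) : oconj (x + y) = oconj x + oconj y := by
  simp [oconj, add_comm]

theorem oconj_smul (r : ℝ) (x : Oct) : oconj (r • x) = r • oconj x := by
  simp [oconj]

theorem oinner_add_right (x y z : Oct) : oinner x (y + z) = oinner x y + oinner x z := by
  simp [oinner, mul_add]; ring

theorem oinner_smul_right (r : ℝ) (x y : Oct) : oinner x (r • y) = r * oinner x y := by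
  simp [oinner, Prod.smul_def, mul_add]

theorem onorm_eq_normSq_add_normSq (x : Oct) :
    onorm x = Quaternion.normSq x.1 + Quaternion.normSq x.2 := by
  simp [onorm, oinner, Quaternion.normSq_def]

theorem onorm_nonneg (x : Oct) : 0 ≤ onorm x := by
  rw [onorm_eq_normSq_add_normSq]
  exact add_nonneg Quaternion.normSq_nonneg Quaternion.normSq_nonneg

theorem onorm_oone : onorm oone = 1 := by
  simp [onorm_eq_normSq_add_normSq, oone]

theorem onorm_oconj (x : Oct) : onorm (oconj x) = onorm x := by
  simp [onorm_eq_normSq_add_normSq, oconj]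

theorem onorm_smul (r : ℝ) (x : Oct) : onorm (r • x) = r ^ 2 * onorm x := by
  simp [onorm_eq_normSq_add_normSq, Prod.smul_def, Quaternion.normSq_smul]; ring

theorem omul_oconj_self (x : Oct) : omul x (oconj x) = onorm x • oone := by
  simp only [omul, oconj, oone, onorm_eq_normSq_add_normSq, star_star, star_neg, neg_mul,
    sub_neg_eq_add, neg_add_cancel, Prod.smul_mk, smul_zero]
  rw [Quaternion.self_mul_star, Quaternion.star_mul_self, Algebra.smul_def, mul_one]
  push_cast
  rfl

theorem oconj_omul_self (x : Oct) : omul (oconj x) x = onorm x • oone := by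
  simp only [omul, oconj, oone, onorm_eq_normSq_add_normSq, mul_neg, neg_mul, sub_neg_eq_add,
    add_neg_cancel, Prod.smul_mk, smul_zero]
  rw [Quaternion.star_mul_self, Quaternion.star_mul_self, Algebra.smul_def, mul_one]
  push_cast
  rfl

theorem oconj_omul_omul (x y : Oct) : omul (oconj x) (omul x y) = onorm x • y := by
  obtain ⟨A, B⟩ := x
  obtain ⟨C, D⟩ := y
  simp [omul, oconj, onorm_eq_normSq_add_normSq, Prod.ext_iff, Quaternion.ext_iff,
    Quaternion.normSq_def']
  refine ⟨⟨?_, ?_, ?_, ?_⟩, ?_, ?_, ?_, ?_⟩ <;> ring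

theorem oRe_omul_assoc (x y z : Oct) :
    oRe (omul (omul x y) z) = oRe (omul x (omul y z)) := by
  obtain ⟨A, B⟩ := x
  obtain ⟨C, D⟩ := y
  obtain ⟨E, F⟩ := z
  simp [omul, oRe]
  ring

theorem jsq_jmk_of_jtr_eq_zero {a b c : ℝ} {x y z : Oct} (h : jtr (jmk a b c x y z) = 0) :
    jsq (jmk a b c x y z) =
      jmk (b * c - onorm x) (c * a + onorm y) (a * b + onorm z)
        ((-a) • x - oconj (omul y z)) ((-b) • y + oconj (omul z x))
        ((-c) • z + oconj (omul x y)) := by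
  obtain rfl : c = -(a + b) := by simp only [jtr, jmk, ja1, ja2, ja3] at h; linarith
  simp only [jsq, jcross, jmul, jinner, jtr, jE, jmk, ja1, ja2, ja3, jx1, jx2, jx3, onorm,
    Prod.smul_mk, Prod.mk_add_mk, Prod.mk_sub_mk, smul_eq_mul, Prod.mk.injEq]
  refine ⟨⟨by ring, by ring, by ring⟩, ?_, ?_, ?_⟩ <;> module

theorem eq_of_jsq_jmk_eq {a b c ε : ℝ} {x y z : Oct} (hε : ε ≠ 0)
    (htr : jtr (jmk a b c x y z) = 0)
    (h : jsq (jmk a b c x y z) = jmk ε (-ε) 0 0 0 oone) :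
    b = -a ∧ c = 0 ∧ onorm x = -ε ∧ onorm y = -ε ∧
      omul x y = oone ∧ omul y z = (-a) • oconj x := by
  have hsum : a + b + c = 0 := htr
  rw [jsq_jmk_of_jtr_eq_zero htr] at h
  simp only [jmk, Prod.mk.injEq] at h
  obtain ⟨⟨e1, e2, e3⟩, o1, o2, o3⟩ := h
  have hyz : omul y z = (-a) • oconj x := by
    rw [← oconj_oconj (omul y z), (by linear_combination (norm := module) -o1 :
      oconj (omul y z) = (-a) • x), oconj_smul]
  have hzx : omul z x = b • oconj y := by
    rw [← oconj_oconj (omul z x), (by linear_combination (norm := module) o2 :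
      oconj (omul z x) = b • y), oconj_smul]
  have hxy : omul x y = oone + c • oconj z := by
    rw [← oconj_oconj (omul x y), (by linear_combination (norm := module) o3 :
      oconj (omul x y) = oone + c • z), oconj_add, oconj_oone, oconj_smul]
  have hxyz : oRe z + c * onorm z = -a * onorm x := by
    have h := oRe_omul_assoc x y z
    rw [hxy, hyz, add_omul, oone_omul, smul_omul, oconj_omul_self, omul_smul,
      omul_oconj_self] at h
    simp only [oRe_add, oRe_smul, oRe_oone] at h
    linarith
  have hzxy : b * onorm y = oRe z + c * onorm z := by
    have h := oRe_omul_assoc z x y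
    rw [hzx, hxy, smul_omul, oconj_omul_self, omul_add, omul_oone, omul_smul,
      omul_oconj_self] at h
    simp only [oRe_add, oRe_smul, oRe_oone] at h
    linarith
  have hab : a + b = 0 := by
    refine (mul_eq_zero.mp ?_).resolve_right hε
    linear_combination (-a) * e1 + b * e2 - hxyz - hzxy
  obtain rfl : c = 0 := by linarith
  refine ⟨by linarith, rfl, by linarith, by linarith, ?_, hyz⟩
  rw [hxy, zero_smul, add_zero]

def tracelessCrossRoots (P : J1) : Set J1 := {X | jtr X = 0 ∧ jsq X = P}

theorem tracelessCrossRoots_Pplus : tracelessCrossRoots Pplus = ∅ := by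
  refine Set.eq_empty_of_forall_notMem ?_
  rintro ⟨⟨a, b, c⟩, x, y, z⟩ ⟨htr, hsq⟩
  obtain ⟨-, -, hx, -⟩ := eq_of_jsq_jmk_eq one_ne_zero htr hsq
  linarith [onorm_nonneg x]

theorem smul_Pminus_add_Qplus (r : ℝ) (x : Oct) :
    r • Pminus + Qplus x = jmk (-r) r 0 x (oconj x) (r • oone) := by
  simp [Pminus, Qplus, jmk]

theorem eq_smul_Pminus_add_Qplus_of_mem_tracelessCrossRoots {a b c : ℝ} {x y z : Oct}
    (h : jmk a b c x y z ∈ tracelessCrossRoots Pminus) :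
    onorm x = 1 ∧ jmk a b c x y z = b • Pminus + Qplus x := by
  obtain ⟨hb, rfl, hx, hy, hxy, hyz⟩ :=
    eq_of_jsq_jmk_eq (ε := -1) (by norm_num) h.1 (by rw [h.2, neg_neg]; rfl)
  rw [neg_neg] at hx hy
  have hyx : y = oconj x := by
    have h := oconj_omul_omul x y
    rw [hxy, hx, one_smul, omul_oone] at h
    exact h.symm
  have hz : z = b • oone := by
    have h := oconj_omul_omul y z
    rw [hyz, hy, one_smul, omul_smul, ← hyx, oconj_omul_self, hy, one_smul] at h
    rw [← h, hb]
  rw [smul_Pminus_add_Qplus, hb, neg_neg, hyx, hz, hb]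
  exact ⟨hx, rfl⟩

theorem smul_Pminus_add_Qplus_mem_tracelessCrossRoots (r : ℝ) {x : Oct} (hx : onorm x = 1) :
    r • Pminus + Qplus x ∈ tracelessCrossRoots Pminus := by
  have htr : jtr (jmk (-r) r 0 x (oconj x) (r • oone)) = 0 := by
    simp [jtr, jmk, ja1, ja2, ja3]
  rw [smul_Pminus_add_Qplus]
  refine ⟨htr, ?_⟩
  rw [jsq_jmk_of_jtr_eq_zero htr, omul_smul, omul_oone, oconj_smul, oconj_oconj, smul_omul,
    oone_omul, oconj_smul, omul_oconj_self, onorm_oconj, onorm_smul, onorm_oone, hx, one_smul,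
    oconj_oone]
  simp only [Pminus, jmk, Prod.mk.injEq]
  refine ⟨⟨by ring, by ring, by ring⟩, by module, by module, by module⟩

theorem tracelessCrossRoots_Pminus : tracelessCrossRoots Pminus =
    {Z : J1 | ∃ (r : ℝ) (x : Oct), onorm x = 1 ∧ Z = r • Pminus + Qplus x} := by
  ext Z
  constructor
  · obtain ⟨⟨a, b, c⟩, x, y, z⟩ := Z
    intro h
    obtain ⟨hx, hZ⟩ := eq_smul_Pminus_add_Qplus_of_mem_tracelessCrossRoots h
    exact ⟨b, x, hx, hZ⟩
  · rintro ⟨r, x, hx, rfl⟩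
    exact smul_Pminus_add_Qplus_mem_tracelessCrossRoots r hx

theorem jmul_add_right (X Y Z : J1) : jmul X (Y + Z) = jmul X Y + jmul X Z := by
  obtain ⟨⟨a, b, c⟩, x, y, z⟩ := X
  obtain ⟨⟨a₁, b₁, c₁⟩, x₁, y₁, z₁⟩ := Y
  obtain ⟨⟨a₂, b₂, c₂⟩, x₂, y₂, z₂⟩ := Z
  simp only [Prod.mk_add_mk, jmul, jmk, ja1, ja2, ja3, jx1, jx2, jx3, oinner_add_right,
    omul_add, add_omul, oconj_add, Prod.mk.injEq]
  refine ⟨⟨by ring, by ring, by ring⟩, ?_, ?_, ?_⟩ <;> module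

theorem jmul_smul_right (r : ℝ) (X Y : J1) : jmul X (r • Y) = r • jmul X Y := by
  obtain ⟨⟨a, b, c⟩, x, y, z⟩ := X
  obtain ⟨⟨a₁, b₁, c₁⟩, x₁, y₁, z₁⟩ := Y
  simp only [Prod.smul_mk, jmul, jmk, ja1, ja2, ja3, jx1, jx2, jx3, smul_eq_mul,
    oinner_smul_right, omul_smul, smul_omul, oconj_smul, Prod.mk.injEq]
  refine ⟨⟨by ring, by ring, by ring⟩, ?_, ?_, ?_⟩ <;> module

theorem jE_jmul (X : J1) : jmul jE X = X := by
  obtain ⟨⟨a, b, c⟩, x, y, z⟩ := X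
  simp [jmul, jE, jmk, ja1, ja2, ja3, jx1, jx2, jx3, omul_zero, zero_omul, oconj_zero, oinner,
    Quaternion.re_zero]
  refine ⟨?_, ?_, ?_⟩ <;> module

theorem jmul_jE (X : J1) : jmul X jE = X := by
  obtain ⟨⟨a, b, c⟩, x, y, z⟩ := X
  simp [jmul, jE, jmk, ja1, ja2, ja3, jx1, jx2, jx3, omul_zero, zero_omul, oconj_zero, oinner,
    Quaternion.re_zero]
  refine ⟨?_, ?_, ?_⟩ <;> module

def jmulLeft (X : J1) : J1 →ₗ[ℝ] J1 where
  toFun := jmul X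
  map_add' := jmul_add_right X
  map_smul' r := jmul_smul_right r X

theorem finrank_Oct : Module.finrank ℝ Oct = 8 := by
  rw [Module.finrank_prod, Quaternion.finrank_eq_four]

open LinearMap in
theorem trace_jmulLeft (X : J1) : trace ℝ J1 (jmulLeft X) = 9 * jtr X := by
  obtain ⟨⟨a, b, c⟩, x, y, z⟩ := X
  rw [trace_eq_trace_fst_add_trace_snd (M := ℝ × ℝ × ℝ),
    trace_eq_trace_fst_add_trace_snd (M := ℝ) (N := ℝ × ℝ),
    trace_eq_trace_fst_add_trace_snd (M := ℝ) (N := ℝ),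
    trace_eq_trace_fst_add_trace_snd (M := Oct) (N := Oct × Oct),
    trace_eq_trace_fst_add_trace_snd (M := Oct) (N := Oct),
    trace_eq_mul_finrank_of_forall_apply_eq_smul (c := a) ?_,
    trace_eq_mul_finrank_of_forall_apply_eq_smul (c := b) ?_,
    trace_eq_mul_finrank_of_forall_apply_eq_smul (c := c) ?_,
    trace_eq_mul_finrank_of_forall_apply_eq_smul (c := (b + c) / 2) ?_,
    trace_eq_mul_finrank_of_forall_apply_eq_smul (c := (c + a) / 2) ?_,
    trace_eq_mul_finrank_of_forall_apply_eq_smul (c := (a + b) / 2) ?_]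
  · simp only [Module.finrank_self, finrank_Oct, jtr, ja1, ja2, ja3]
    ring
  all_goals
    intro v
    simp [jmulLeft, jmul, jmk, ja1, ja2, ja3, jx1, jx2, jx3, oinner, omul_zero, zero_omul,
      oconj_zero, Quaternion.re_zero]
  all_goals module

theorem apply_jE_of_mem_F4 {g : J1 ≃ₗ[ℝ] J1} (hg : g ∈ F4) : g jE = jE := by
  have hunit : ∀ Y, jmul (g jE) Y = Y := fun Y => by
    rw [← g.apply_symm_apply Y, ← hg, jE_jmul]
  rw [← jmul_jE (g jE), hunit]

theorem jtr_apply_of_mem_F4 {g : J1 ≃ₗ[ℝ] J1} (hg : g ∈ F4) (X : J1) :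
    jtr (g X) = jtr X := by
  have hconj : jmulLeft (g X) = g.conj (jmulLeft X) := LinearMap.ext fun Y => by
    change jmul (g X) Y = g (jmul X (g.symm Y))
    rw [hg, g.apply_symm_apply]
  have h := LinearMap.trace_conj' (jmulLeft X) g
  rw [← hconj, trace_jmulLeft, trace_jmulLeft] at h
  linarith

theorem jsq_apply_of_mem_F4 {g : J1 ≃ₗ[ℝ] J1} (hg : g ∈ F4) (X : J1) :
    jsq (g X) = g (jsq X) := by
  have hsq : jmul (g X) (g X) = g (jmul X X) := (hg X X).symm
  have hinner : jinner (g X) (g X) = jinner X X := by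
    rw [jinner, hsq, jtr_apply_of_mem_F4 hg, jinner]
  simp only [jsq, jcross, hsq, hinner, jtr_apply_of_mem_F4 hg, map_smul, map_add, map_sub,
    apply_jE_of_mem_F4 hg]

theorem mapsTo_tracelessCrossRoots_of_mem_F4 {g : J1 ≃ₗ[ℝ] J1} (hg : g ∈ F4) (P : J1) :
    Set.MapsTo g (tracelessCrossRoots P) (tracelessCrossRoots (g P)) :=
  fun X ⟨htr, hsq⟩ =>
    ⟨by rw [jtr_apply_of_mem_F4 hg, htr], by rw [jsq_apply_of_mem_F4 hg, hsq]⟩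

theorem orbF4_Pplus_ne_orbF4_Pminus : orbF4 Pplus ≠ orbF4 Pminus := by
  intro horb
  obtain ⟨g, hg, hgP⟩ : Pplus ∈ orbF4 Pminus := horb ▸ ⟨1, F4.one_mem, rfl⟩
  have hQ := mapsTo_tracelessCrossRoots_of_mem_F4 hg Pminus
    (smul_Pminus_add_Qplus_mem_tracelessCrossRoots 0 onorm_oone)
  rw [hgP, tracelessCrossRoots_Pplus] at hQ
  exact hQ

/-- **Lemma (cce-12).** With `R^± = {X ∈ J¹ | tr X = 0, X^{×2} = P^±}`:
(a) `R⁺ = ∅`; (b) `R⁻ = {rP⁻ + Q⁺(x) | r ∈ ℝ, n(x) = 1}`;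
(c) consequently `P⁺` and `P⁻` lie in different `F₄₍₋₂₀₎`-orbits. -/
theorem stmt_15 :
    {X : J1 | jtr X = 0 ∧ jsq X = Pplus} = (∅ : Set J1) ∧
    {X : J1 | jtr X = 0 ∧ jsq X = Pminus}
      = {Z : J1 | ∃ (r : ℝ) (x : Oct), onorm x = 1 ∧ Z = r • Pminus + Qplus x} ∧
    orbF4 Pplus ≠ orbF4 Pminus :=
  ⟨tracelessCrossRoots_Pplus, tracelessCrossRoots_Pminus, orbF4_Pplus_ne_orbF4_Pminus⟩
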